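/- Let d ≥ 3 and A ∈ ℂ^{d×d}. Then condition (C_d) holds if and only if: for each k = 1, …, d−1 the function θ ↦ trace((e^{−iθ}A + e^{iθ}A*)^k) is constant on ℝ, and the function θ ↦ trace((e^{−iθ}A + e^{iθ}A*)^d) − e^{−i d θ}·trace(A^d) − e^{i d θ}·trace((A*)^d) is constant on ℝ. -/

import Mathlib

open Matrix Polynomial Finset

variable {d : ℕ}

/-- trace commutes with entrywise ring hom map -/
lemma trace_map' {R S : Type*} [CommRing R] [CommRing S] (f : R →+* S)
    (M : Matrix (Fin d) (Fin d) R) : (M.map ⇑f).trace = f M.trace := by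
  simp [Matrix.trace, Matrix.diag, Matrix.map_apply, map_sum]

/-- det (w • 1 - S) is the charpoly evaluated at w -/
lemma det_smul_one_sub (S : Matrix (Fin d) (Fin d) ℂ) (w : ℂ) :
    (w • (1 : Matrix (Fin d) (Fin d) ℂ) - S).det = (Matrix.charpoly S).eval w := by
  have h : (w • (1 : Matrix (Fin d) (Fin d) ℂ) - S) = (charmatrix S).map (Polynomial.eval w) := by
    ext i j
    by_cases hij : i = j <;>
      simp [hij, charmatrix_apply, Matrix.map_apply, Matrix.smul_apply, Matrix.one_apply,
        Matrix.diagonal_apply]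
  rw [h, Matrix.charpoly]
  have := (RingHom.map_det (Polynomial.evalRingHom w) (charmatrix S)).symm
  simpa [RingHom.mapMatrix_apply] using this

lemma charpoly_conj_unitary (U D : Matrix (Fin d) (Fin d) ℂ) (hU : U * star U = 1)
    (hU' : star U * U = 1) : Matrix.charpoly (U * D * star U) = Matrix.charpoly D := by
  have key : charmatrix (U * D * star U) =
      ((C : ℂ →+* ℂ[X]).mapMatrix U) * charmatrix D * ((C : ℂ →+* ℂ[X]).mapMatrix (star U)) := by
    rw [charmatrix, charmatrix]
    rw [mul_sub, sub_mul]
    congr 1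
    · have h1 : ((C : ℂ →+* ℂ[X]).mapMatrix U) * Matrix.scalar (Fin d) (X : ℂ[X]) =
          Matrix.scalar (Fin d) (X : ℂ[X]) * ((C : ℂ →+* ℂ[X]).mapMatrix U) :=
        (Matrix.scalar_commute _ (fun r' => Commute.all _ _) _).symm
      rw [h1, mul_assoc, ← _root_.map_mul, hU, _root_.map_one, mul_one]
    · rw [← _root_.map_mul, ← _root_.map_mul]
  rw [Matrix.charpoly, Matrix.charpoly, key, Matrix.det_mul, Matrix.det_mul]
  have : ((C : ℂ →+* ℂ[X]).mapMatrix U).det * ((C : ℂ →+* ℂ[X]).mapMatrix (star U)).det = 1 := by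
    rw [mul_comm (((C : ℂ →+* ℂ[X]).mapMatrix U)).det, ← Matrix.det_mul, ← _root_.map_mul, hU', _root_.map_one,
      Matrix.det_one]
  calc ((C : ℂ →+* ℂ[X]).mapMatrix U).det * (charmatrix D).det *
        ((C : ℂ →+* ℂ[X]).mapMatrix (star U)).det
      = (charmatrix D).det * (((C : ℂ →+* ℂ[X]).mapMatrix U).det *
        ((C : ℂ →+* ℂ[X]).mapMatrix (star U)).det) := by ring
    _ = (charmatrix D).det := by rw [this, mul_one]

lemma charpoly_diagonal_real (v : Fin d → ℝ) :
    Matrix.charpoly (Matrix.diagonal (fun i => (v i : ℂ))) =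
      (∏ i, (X - C (v i))).map (algebraMap ℝ ℂ) := by
  have h : charmatrix (Matrix.diagonal (fun i => (v i : ℂ))) =
      Matrix.diagonal (fun i => (X : ℂ[X]) - C ((v i : ℂ))) := by
    ext i j
    by_cases hij : i = j <;>
      simp [hij, charmatrix_apply, Matrix.diagonal_apply]
  rw [Matrix.charpoly, h, Matrix.det_diagonal, Polynomial.map_prod]
  congr 1
  ext i
  simp [Polynomial.map_sub, Complex.coe_algebraMap]
open Matrix Polynomial Finset

variable {d : ℕ}

section herm

lemma conj_pow_eq (U D : Matrix (Fin d) (Fin d) ℂ) (hU : U * star U = 1)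
    (hU' : star U * U = 1) (k : ℕ) : (U * D * star U) ^ k = U * D ^ k * star U := by
  induction k with
  | zero => simp [pow_zero, hU]
  | succ k ih =>
      rw [pow_succ, ih, pow_succ]
      calc U * D ^ k * star U * (U * D * star U)
          = U * (D ^ k * (star U * U) * D) * star U := by simp only [mul_assoc]
        _ = U * (D ^ k * D) * star U := by rw [hU', mul_one]

variable {M : Matrix (Fin d) (Fin d) ℂ} (hM : M.IsHermitian)

lemma herm_conj_pow (k : ℕ) :
    M ^ k = (hM.eigenvectorUnitary : Matrix (Fin d) (Fin d) ℂ) *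
      (Matrix.diagonal (fun i => (hM.eigenvalues i : ℂ))) ^ k *
      star (hM.eigenvectorUnitary : Matrix (Fin d) (Fin d) ℂ) := by
  set U := (hM.eigenvectorUnitary : Matrix (Fin d) (Fin d) ℂ) with hUdef
  have hU : U * star U = 1 := Unitary.mul_star_self_of_mem hM.eigenvectorUnitary.2
  have hU' : star U * U = 1 := Unitary.star_mul_self_of_mem hM.eigenvectorUnitary.2
  have hspec : M = U * (Matrix.diagonal (fun i => (hM.eigenvalues i : ℂ))) * star U := by
    have := hM.spectral_theorem
    rw [Unitary.conjStarAlgAut_apply] at this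
    exact this
  have h2 := conj_pow_eq U (Matrix.diagonal (fun i => (hM.eigenvalues i : ℂ))) hU hU' k
  rw [← hspec] at h2
  exact h2

lemma herm_trace_pow (k : ℕ) :
    (M ^ k).trace = ((∑ i, hM.eigenvalues i ^ k : ℝ) : ℂ) := by
  rw [herm_conj_pow hM k, Matrix.trace_mul_cycle]
  have hU' : star (hM.eigenvectorUnitary : Matrix (Fin d) (Fin d) ℂ) *
      (hM.eigenvectorUnitary : Matrix (Fin d) (Fin d) ℂ) = 1 :=
    Unitary.star_mul_self_of_mem hM.eigenvectorUnitary.2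
  rw [hU', one_mul, Matrix.diagonal_pow, Matrix.trace_diagonal]
  push_cast
  rfl

lemma herm_charpoly :
    Matrix.charpoly M = (∏ i, (X - C (hM.eigenvalues i))).map (algebraMap ℝ ℂ) := by
  set U := (hM.eigenvectorUnitary : Matrix (Fin d) (Fin d) ℂ)
  have hU : U * star U = 1 := Unitary.mul_star_self_of_mem hM.eigenvectorUnitary.2
  have hU' : star U * U = 1 := Unitary.star_mul_self_of_mem hM.eigenvectorUnitary.2
  have h1 : M = U * (Matrix.diagonal (fun i => (hM.eigenvalues i : ℂ))) * star U := by
    have := hM.spectral_theorem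
    rw [Unitary.conjStarAlgAut_apply] at this
    exact this
  have h2 := charpoly_conj_unitary U (Matrix.diagonal (fun i => (hM.eigenvalues i : ℂ))) hU hU'
  rw [← h1] at h2
  rw [h2, charpoly_diagonal_real]

end herm
lemma newton_real (n : ℕ) (lam : Fin n → ℝ) (k : ℕ) (h1 : 1 ≤ k) (h2 : k ≤ n) :
    (∑ i, lam i ^ k)
      + (∑ j ∈ Finset.Ioo 0 k, (∏ i, (X - C (lam i))).coeff (n - j) * ∑ i, lam i ^ (k - j))
      + (k : ℝ) * (∏ i, (X - C (lam i))).coeff (n - k) = 0 := by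
  classical
  set E : ℕ → ℝ := fun j => MvPolynomial.aeval lam (MvPolynomial.esymm (Fin n) ℝ j) with hE
  set p : ℕ → ℝ := fun m => ∑ i, lam i ^ m with hp
  have hcoeff : ∀ j, j ≤ n → (∏ i, (X - C (lam i))).coeff (n - j) = (-1)^j * E j := by
    intro j hj
    have hprod : (∏ i, (X - C (lam i)))
        = (Multiset.map (fun t => X - C t) (Multiset.map lam Finset.univ.val)).prod := by
      rw [Multiset.map_map]; rfl
    have hcard : Multiset.card (Multiset.map lam Finset.univ.val) = n := by simp
    rw [hprod, Multiset.prod_X_sub_C_coeff _ (by rw [hcard]; omega)]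
    rw [hcard]
    have hnn : n - (n - j) = j := by omega
    rw [hnn, hE]
    simp only []
    congr 1
    rw [MvPolynomial.aeval_esymm_eq_multiset_esymm]
  have key : (k:ℝ) * E k = (-1)^(k+1) * ∑ j ∈ Finset.range k, (-1)^j * E j * p (k - j) := by
    have h0 := congrArg (MvPolynomial.aeval lam) (MvPolynomial.mul_esymm_eq_sum (Fin n) ℝ k)
    simp only [_root_.map_mul, map_sum, map_pow, map_neg, _root_.map_one, map_natCast] at h0
    have hps : ∀ m, MvPolynomial.aeval lam (MvPolynomial.psum (Fin n) ℝ m) = p m := by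
      intro m; simp [MvPolynomial.psum, hp]
    rw [h0]
    congr 1
    rw [Finset.sum_filter, Finset.Nat.sum_antidiagonal_eq_sum_range_succ_mk,
      Finset.sum_range_succ, if_neg (lt_irrefl k), add_zero]
    apply Finset.sum_congr rfl
    intro j hj
    rw [if_pos (Finset.mem_range.mp hj), hps]
  have hrange : Finset.range k = insert 0 (Finset.Ioo 0 k) := by
    ext x; simp only [Finset.mem_range, Finset.mem_insert, Finset.mem_Ioo]; omega
  have hE0 : E 0 = 1 := by simp [hE, MvPolynomial.esymm_zero]
  rw [hrange, Finset.sum_insert (by simp)] at key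
  simp only [pow_zero, one_mul, hE0, Nat.sub_zero] at key
  set S := ∑ j ∈ Finset.Ioo 0 k, (-1:ℝ)^j * E j * p (k - j) with hS
  have hsum : ∑ j ∈ Finset.Ioo 0 k, (∏ i, (X - C (lam i))).coeff (n - j) * ∑ i, lam i ^ (k - j)
      = S := by
    apply Finset.sum_congr rfl
    intro j hj
    rw [hcoeff j (le_trans (le_of_lt (Finset.mem_Ioo.mp hj).2) h2)]
  have hkk : ((-1:ℝ))^k * (-1)^(k+1) = -1 := by
    rw [← pow_add]; exact Odd.neg_one_pow ⟨k, by ring⟩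
  rw [hsum, hcoeff k h2]
  show p k + S + (k:ℝ) * ((-1)^k * E k) = 0
  linear_combination ((-1:ℝ))^k * key + (p k + S) * hkk

lemma newton_matrix {M : Matrix (Fin d) (Fin d) ℂ} (hM : M.IsHermitian) (k : ℕ)
    (h1 : 1 ≤ k) (h2 : k ≤ d) :
    (M ^ k).trace
      + (∑ j ∈ Finset.Ioo 0 k, (Matrix.charpoly M).coeff (d - j) * (M ^ (k - j)).trace)
      + (k : ℂ) * (Matrix.charpoly M).coeff (d - k) = 0 := by
  have hc : ∀ j : ℕ, (Matrix.charpoly M).coeff j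
      = (((∏ i, (X - C (hM.eigenvalues i))).coeff j : ℝ) : ℂ) := by
    intro j
    rw [herm_charpoly hM, Polynomial.coeff_map]
    rfl
  simp only [hc, herm_trace_pow hM]
  have := newton_real d hM.eigenvalues k h1 h2
  have := congrArg (Complex.ofReal) this
  push_cast at this ⊢
  exact this
section family
variable (V : Matrix (Fin d) (Fin d) ℂ)

/-- the Hermitian family -/
noncomputable def Mf (θ : ℝ) : Matrix (Fin d) (Fin d) ℂ :=
  Complex.exp (-(θ:ℂ) * Complex.I) • V + Complex.exp ((θ:ℂ) * Complex.I) • Vᴴ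

lemma star_exp_real (t : ℝ) : star (Complex.exp ((t:ℂ) * Complex.I)) =
    Complex.exp (-(t:ℂ) * Complex.I) := by
  rw [Complex.star_def, ← Complex.exp_conj]
  congr 1
  simp [Complex.conj_ofReal]

lemma Mf_herm (θ : ℝ) : (Mf V θ).IsHermitian := by
  unfold Matrix.IsHermitian Mf
  rw [conjTranspose_add, conjTranspose_smul, conjTranspose_smul, conjTranspose_conjTranspose]
  rw [star_exp_real]
  have h2 : star (Complex.exp (-(θ:ℂ) * Complex.I)) = Complex.exp ((θ:ℂ) * Complex.I) := by
    rw [Complex.star_def, ← Complex.exp_conj]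
    congr 1
    simp [Complex.conj_ofReal]
  rw [h2, add_comm]

/-- matrix of polynomials -/
noncomputable def Np : Matrix (Fin d) (Fin d) ℂ[X] :=
  V.map C + (X : ℂ[X]) • Vᴴ.map C

lemma Np_eval (z : ℂ) : ((Polynomial.evalRingHom z).mapMatrix (Np V)) = V + z • Vᴴ := by
  ext i j
  simp only [Np, RingHom.mapMatrix_apply, Matrix.map_apply, Matrix.add_apply,
    Matrix.smul_apply, Polynomial.coe_evalRingHom, Polynomial.eval_add, Polynomial.eval_mul,
    Polynomial.eval_C, Polynomial.eval_X, smul_eq_mul]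

lemma trace_pow_eval (z : ℂ) (k : ℕ) :
    ((V + z • Vᴴ) ^ k).trace = Polynomial.eval z (((Np V) ^ k).trace) := by
  have h1 : ((V + z • Vᴴ) ^ k) = ((Polynomial.evalRingHom z).mapMatrix ((Np V) ^ k)) := by
    rw [map_pow, Np_eval]
  rw [h1, RingHom.mapMatrix_apply, _root_.trace_map']
  rfl

lemma det_eval (z : ℂ) : (V + z • Vᴴ).det = Polynomial.eval z ((Np V).det) := by
  rw [← Np_eval V z, ← RingHom.map_det]
  rfl

lemma exp_pow_real (t : ℝ) (k : ℕ) :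
    Complex.exp (-(t:ℂ) * Complex.I) ^ k = Complex.exp (-(k:ℂ) * (t:ℂ) * Complex.I) := by
  rw [← Complex.exp_nat_mul]
  congr 1
  ring

lemma Mf_eq (θ : ℝ) : Mf V θ =
    Complex.exp (-(θ:ℂ) * Complex.I) • (V + Complex.exp (2*(θ:ℂ)*Complex.I) • Vᴴ) := by
  unfold Mf
  rw [smul_add, smul_smul, ← Complex.exp_add]
  congr 2
  ring

lemma Mf_trace_pow (θ : ℝ) (k : ℕ) :
    ((Mf V θ) ^ k).trace = Complex.exp (-(k:ℂ) * (θ:ℂ) * Complex.I) *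
      Polynomial.eval (Complex.exp (2*(θ:ℂ)*Complex.I)) (((Np V) ^ k).trace) := by
  rw [Mf_eq, _root_.smul_pow, Matrix.trace_smul, trace_pow_eval, exp_pow_real]
  rfl

lemma Mf_det (θ : ℝ) :
    (Mf V θ).det = Complex.exp (-(d:ℂ) * (θ:ℂ) * Complex.I) *
      Polynomial.eval (Complex.exp (2*(θ:ℂ)*Complex.I)) ((Np V).det) := by
  rw [Mf_eq, Matrix.det_smul, det_eval, Fintype.card_fin, exp_pow_real]

lemma Np_trace_eval_zero (k : ℕ) :
    Polynomial.eval 0 (((Np V) ^ k).trace) = (V ^ k).trace := by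
  rw [← trace_pow_eval]
  simp

lemma Np_det_eval_zero : Polynomial.eval 0 ((Np V).det) = V.det := by
  rw [← det_eval]
  simp

end family

/-- If a trig-polynomial-type function is constant then the bottom coefficient vanishes. -/
lemma const_freq (q : Polynomial ℂ) (c : ℂ) (m : ℕ) (hm : 0 < m)
    (H : ∀ θ : ℝ, Complex.exp (-(m:ℂ) * (θ:ℂ) * Complex.I) *
      Polynomial.eval (Complex.exp (2*(θ:ℂ)*Complex.I)) q = c) :
    Polynomial.eval 0 q = 0 := by
  have H2 : ∀ θ : ℝ, Polynomial.eval (Complex.exp (2*(θ:ℂ)*Complex.I)) q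
      = c * Complex.exp ((m:ℂ) * (θ:ℂ) * Complex.I) := by
    intro θ
    have hone : Complex.exp ((m:ℂ)*(θ:ℂ)*Complex.I) * Complex.exp (-(m:ℂ)*(θ:ℂ)*Complex.I)
        = 1 := by
      rw [← Complex.exp_add, show (m:ℂ)*(θ:ℂ)*Complex.I + -(m:ℂ)*(θ:ℂ)*Complex.I = 0 by ring]
      exact Complex.exp_zero
    calc Polynomial.eval (Complex.exp (2*(θ:ℂ)*Complex.I)) q
        = (Complex.exp ((m:ℂ)*(θ:ℂ)*Complex.I) * Complex.exp (-(m:ℂ)*(θ:ℂ)*Complex.I)) *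
          Polynomial.eval (Complex.exp (2*(θ:ℂ)*Complex.I)) q := by rw [hone, one_mul]
      _ = Complex.exp ((m:ℂ)*(θ:ℂ)*Complex.I) * (Complex.exp (-(m:ℂ)*(θ:ℂ)*Complex.I) *
          Polynomial.eval (Complex.exp (2*(θ:ℂ)*Complex.I)) q) := by ring
      _ = Complex.exp ((m:ℂ)*(θ:ℂ)*Complex.I) * c := by rw [H θ]
      _ = c * Complex.exp ((m:ℂ)*(θ:ℂ)*Complex.I) := mul_comm _ _
  set g : Polynomial ℂ := q^2 - C (c^2) * X^m with hg
  have hroot : ∀ θ : ℝ, g.IsRoot (Complex.exp (2*(θ:ℂ)*Complex.I)) := by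
    intro θ
    have h2 : (Polynomial.eval (Complex.exp (2*(θ:ℂ)*Complex.I)) q)^2
        = c^2 * (Complex.exp (2*(θ:ℂ)*Complex.I))^m := by
      rw [H2 θ, mul_pow, ← Complex.exp_nat_mul, ← Complex.exp_nat_mul]
      rw [show ((2:ℕ):ℂ) * ((m:ℂ)*(θ:ℂ)*Complex.I) = (m:ℂ) * (2*(θ:ℂ)*Complex.I) by push_cast; ring]
    simp only [Polynomial.IsRoot, hg, Polynomial.eval_sub, Polynomial.eval_mul,
      Polynomial.eval_pow, Polynomial.eval_C, Polynomial.eval_X]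
    rw [h2]
    ring
  have hinj : Set.InjOn (fun θ : ℝ => Complex.exp (2*(θ:ℂ)*Complex.I)) (Set.Ioo 0 1) := by
    intro θ₁ h₁ θ₂ h₂ heq
    obtain ⟨n, hn⟩ := Complex.exp_eq_exp_iff_exists_int.mp heq
    have h3 : (2*(θ₁:ℂ)) * Complex.I = (2*(θ₂:ℂ) + (n:ℂ)*(2*(Real.pi:ℂ))) * Complex.I := by
      linear_combination hn
    have h4 := mul_right_cancel₀ Complex.I_ne_zero h3
    have h5 : 2*θ₁ = 2*θ₂ + (n:ℝ)*(2*Real.pi) := by exact_mod_cast h4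
    have hπ := Real.pi_gt_three
    obtain ⟨hθ₁0, hθ₁1⟩ := h₁
    obtain ⟨hθ₂0, hθ₂1⟩ := h₂
    have hn0 : n = 0 := by
      rcases lt_trichotomy n 0 with h | h | h
      · have : (n:ℝ) ≤ -1 := by exact_mod_cast (by omega : n ≤ -1)
        nlinarith
      · exact h
      · have : (1:ℝ) ≤ (n:ℝ) := by exact_mod_cast (by omega : 1 ≤ n)
        nlinarith
    rw [hn0] at h5
    push_cast at h5
    linarith
  have hinf : {x | g.IsRoot x}.Infinite := by
    apply Set.Infinite.mono _ (Set.Infinite.image hinj (Set.Ioo_infinite (by norm_num)))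
    rintro x ⟨θ, _, rfl⟩
    exact hroot θ
  have hg0 : g = 0 := Polynomial.eq_zero_of_infinite_isRoot g hinf
  have := congrArg (Polynomial.eval 0) hg0
  simp only [hg, Polynomial.eval_sub, Polynomial.eval_mul, Polynomial.eval_pow,
    Polynomial.eval_C, Polynomial.eval_X, Polynomial.eval_zero] at this
  rw [zero_pow (by omega : m ≠ 0), mul_zero, sub_zero] at this
  exact pow_eq_zero_iff (n := 2) (by norm_num) |>.mp this
/-- constancy of a function -/
def Konst (f : ℝ → ℂ) : Prop := ∀ θ, f θ = f 0

section core
variable (V : Matrix (Fin d) (Fin d) ℂ)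

noncomputable def aC (k : ℕ) (θ : ℝ) : ℂ := (Matrix.charpoly (Mf V θ)).coeff (d - k)

noncomputable def pC (k : ℕ) (θ : ℝ) : ℂ := ((Mf V θ) ^ k).trace

lemma newtonC (k : ℕ) (h1 : 1 ≤ k) (h2 : k ≤ d) (θ : ℝ) :
    pC V k θ + (∑ j ∈ Finset.Ioo 0 k, aC V j θ * pC V (k - j) θ) + (k:ℂ) * aC V k θ = 0 :=
  newton_matrix (Mf_herm V θ) k h1 h2

lemma aux1 (m : ℕ) (hm : m ≤ d) (hp : ∀ k, 1 ≤ k → k ≤ m → Konst (pC V k)) :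
    ∀ k, 1 ≤ k → k ≤ m → Konst (aC V k) := by
  intro k
  induction k using Nat.strong_induction_on with
  | _ k ih =>
    intro h1 h2 θ
    have hN := newtonC V k h1 (le_trans h2 hm) θ
    have hN0 := newtonC V k h1 (le_trans h2 hm) 0
    have hsum : (∑ j ∈ Finset.Ioo 0 k, aC V j θ * pC V (k - j) θ)
        = (∑ j ∈ Finset.Ioo 0 k, aC V j 0 * pC V (k - j) 0) := by
      apply Finset.sum_congr rfl
      intro j hj
      obtain ⟨hj0, hjk⟩ := Finset.mem_Ioo.mp hj
      rw [ih j hjk (by omega) (by omega) θ, hp (k - j) (by omega) (by omega) θ]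
    have hk : (k:ℂ) ≠ 0 := Nat.cast_ne_zero.mpr (by omega)
    have hpk := hp k h1 h2 θ
    have hfin : (k:ℂ) * aC V k θ = (k:ℂ) * aC V k 0 := by
      linear_combination hN - hN0 - hsum - hpk
    exact mul_left_cancel₀ hk hfin

lemma aux2 (m : ℕ) (hm : m ≤ d) (ha : ∀ k, 1 ≤ k → k ≤ m → Konst (aC V k)) :
    ∀ k, 1 ≤ k → k ≤ m → Konst (pC V k) := by
  intro k
  induction k using Nat.strong_induction_on with
  | _ k ih =>
    intro h1 h2 θ
    have hN := newtonC V k h1 (le_trans h2 hm) θ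
    have hN0 := newtonC V k h1 (le_trans h2 hm) 0
    have hsum : (∑ j ∈ Finset.Ioo 0 k, aC V j θ * pC V (k - j) θ)
        = (∑ j ∈ Finset.Ioo 0 k, aC V j 0 * pC V (k - j) 0) := by
      apply Finset.sum_congr rfl
      intro j hj
      obtain ⟨hj0, hjk⟩ := Finset.mem_Ioo.mp hj
      rw [ha j (by omega) (by omega) θ, ih (k - j) (by omega) (by omega) (by omega) θ]
    have hak := ha k h1 h2 θ
    linear_combination hN - hN0 - hsum - (k:ℂ) * hak

/-- the constant-by-Newton combination -/
noncomputable def hC (θ : ℝ) : ℂ := pC V d θ + (d:ℂ) * (-1:ℂ)^d * (Mf V θ).det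

lemma aC_top (θ : ℝ) : aC V d θ = (-1:ℂ)^d * (Mf V θ).det := by
  have h := Matrix.det_eq_sign_charpoly_coeff (Mf V θ)
  rw [Fintype.card_fin] at h
  have hsq : ((-1:ℂ)^d) * ((-1:ℂ)^d) = 1 := by
    rw [← mul_pow]; norm_num
  unfold aC
  rw [Nat.sub_self]
  calc (Matrix.charpoly (Mf V θ)).coeff 0
      = (1:ℂ) * (Matrix.charpoly (Mf V θ)).coeff 0 := (one_mul _).symm
    _ = (-1:ℂ)^d * ((-1:ℂ)^d * (Matrix.charpoly (Mf V θ)).coeff 0) := by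
        rw [← mul_assoc, hsq]
    _ = (-1:ℂ)^d * (Mf V θ).det := by rw [← h]

lemma hC_konst (hd : 3 ≤ d)
    (ha : ∀ k, 1 ≤ k → k ≤ d - 1 → Konst (aC V k))
    (hp : ∀ k, 1 ≤ k → k ≤ d - 1 → Konst (pC V k)) : Konst (hC V) := by
  intro θ
  have hN := newtonC V d (by omega) le_rfl θ
  have hN0 := newtonC V d (by omega) le_rfl 0
  have hsum : (∑ j ∈ Finset.Ioo 0 d, aC V j θ * pC V (d - j) θ)
      = (∑ j ∈ Finset.Ioo 0 d, aC V j 0 * pC V (d - j) 0) := by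
    apply Finset.sum_congr rfl
    intro j hj
    obtain ⟨hj0, hjd⟩ := Finset.mem_Ioo.mp hj
    rw [ha j (by omega) (by omega) θ, hp (d - j) (by omega) (by omega) θ]
  have hda : (d:ℂ) * aC V d θ = (d:ℂ) * (-1:ℂ)^d * (Mf V θ).det := by
    rw [aC_top]; ring
  have hda0 : (d:ℂ) * aC V d 0 = (d:ℂ) * (-1:ℂ)^d * (Mf V 0).det := by
    rw [aC_top]; ring
  unfold hC
  linear_combination hN - hN0 - hsum - hda + hda0

lemma w_eq_zero (hd : 3 ≤ d) (hh : Konst (hC V)) :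
    (V ^ d).trace + (d:ℂ) * (-1:ℂ)^d * V.det = 0 := by
  set qh : Polynomial ℂ := ((Np V) ^ d).trace + C ((d:ℂ) * (-1:ℂ)^d) * (Np V).det with hqh
  have hstruct : ∀ θ : ℝ, hC V θ = Complex.exp (-(d:ℂ) * (θ:ℂ) * Complex.I) *
      Polynomial.eval (Complex.exp (2*(θ:ℂ)*Complex.I)) qh := by
    intro θ
    unfold hC pC
    rw [Mf_trace_pow, Mf_det, hqh]
    simp only [Polynomial.eval_add, Polynomial.eval_mul, Polynomial.eval_C]
    ring
  have hcf : ∀ θ : ℝ, Complex.exp (-(d:ℂ) * (θ:ℂ) * Complex.I) *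
      Polynomial.eval (Complex.exp (2*(θ:ℂ)*Complex.I)) qh = hC V 0 := by
    intro θ
    rw [← hstruct θ]
    exact hh θ
  have h0 := const_freq qh (hC V 0) d (by omega) hcf
  rw [hqh] at h0
  simp only [Polynomial.eval_add, Polynomial.eval_mul, Polynomial.eval_C] at h0
  rw [Np_trace_eval_zero, Np_det_eval_zero] at h0
  linear_combination h0

lemma w_eq_zero' (hd : 3 ≤ d) (hh : Konst (hC V)) :
    (Vᴴ ^ d).trace + (d:ℂ) * (-1:ℂ)^d * Vᴴ.det = 0 := by
  have h := w_eq_zero V hd hh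
  have := congrArg star h
  rw [star_add, star_mul', star_mul', star_zero] at this
  rw [← Matrix.trace_conjTranspose, Matrix.conjTranspose_pow, ← Matrix.det_conjTranspose] at this
  have h1 : star ((d:ℂ)) = (d:ℂ) := by
    simp [Complex.star_def, Complex.conj_natCast]
  have h2 : star ((-1:ℂ)^d) = (-1:ℂ)^d := by
    rw [star_pow, star_neg, star_one]
  rw [h1, h2] at this
  linear_combination this

noncomputable def fC (θ : ℝ) : ℂ :=
  (Mf V θ).det - Complex.exp (-(d:ℂ) * (θ:ℂ) * Complex.I) * V.det
    - Complex.exp ((d:ℂ) * (θ:ℂ) * Complex.I) * Vᴴ.det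

noncomputable def gC (θ : ℝ) : ℂ :=
  pC V d θ - Complex.exp (-(d:ℂ) * (θ:ℂ) * Complex.I) * (V ^ d).trace
    - Complex.exp ((d:ℂ) * (θ:ℂ) * Complex.I) * (Vᴴ ^ d).trace

lemma g_eq_h_f (hd : 3 ≤ d) (hh : Konst (hC V)) (θ : ℝ) :
    gC V θ = hC V θ - (d:ℂ) * (-1:ℂ)^d * fC V θ := by
  have hw := w_eq_zero V hd hh
  have hw' := w_eq_zero' V hd hh
  unfold gC hC fC
  linear_combination (- Complex.exp (-(d:ℂ) * (θ:ℂ) * Complex.I)) * hw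
    + (- Complex.exp ((d:ℂ) * (θ:ℂ) * Complex.I)) * hw'

/-- Core equivalence between the coefficient form and the trace form. -/
lemma core_iff (hd : 3 ≤ d) :
    ((∀ k, 1 ≤ k → k ≤ d - 1 → Konst (aC V k)) ∧ Konst (fC V)) ↔
    ((∀ k, 1 ≤ k → k ≤ d - 1 → Konst (pC V k)) ∧ Konst (gC V)) := by
  constructor
  · rintro ⟨ha, hf⟩
    have hp := aux2 V (d - 1) (by omega) ha
    have hh := hC_konst V hd ha hp
    refine ⟨hp, fun θ => ?_⟩
    rw [g_eq_h_f V hd hh θ, g_eq_h_f V hd hh 0, hh θ, hf θ]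
  · rintro ⟨hp, hg⟩
    have ha := aux1 V (d - 1) (by omega) hp
    have hh := hC_konst V hd ha hp
    refine ⟨ha, fun θ => ?_⟩
    have hd0 : ((d:ℂ) * (-1:ℂ)^d) ≠ 0 := by
      apply mul_ne_zero
      · exact_mod_cast Nat.cast_ne_zero.mpr (by omega)
      · exact pow_ne_zero _ (by norm_num)
    apply mul_left_cancel₀ hd0
    have h1 := g_eq_h_f V hd hh θ
    have h2 := g_eq_h_f V hd hh 0
    have h3 := hg θ
    have h4 := hh θ
    linear_combination h1 - h2 + h4 - h3

end core
/-- Condition `(C_d)`. -/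
def CondC {d : ℕ} (A : Matrix (Fin d) (Fin d) ℂ) : Prop :=
  ∃ P : Polynomial ℝ, ∀ θ : ℝ, ∀ w : ℂ,
    (w • (1 : Matrix (Fin d) (Fin d) ℂ)
        - (1/2 : ℂ) • (Complex.exp (-(θ : ℂ) * Complex.I) • A
            + Complex.exp ((θ : ℂ) * Complex.I) • Aᴴ)).det
      = Polynomial.aeval w P
        - ((-1/2 : ℂ)) ^ (d - 1)
            * ((Complex.exp (-(d : ℂ) * (θ : ℂ) * Complex.I) * A.det).re : ℂ)

section final
variable (A : Matrix (Fin d) (Fin d) ℂ)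

noncomputable def Kf (θ : ℝ) : ℂ :=
  ((-1/2 : ℂ)) ^ (d - 1) * ((Complex.exp (-(d : ℂ) * (θ : ℂ) * Complex.I) * A.det).re : ℂ)

lemma conj_half : ((1/2:ℂ) • A)ᴴ = (1/2:ℂ) • Aᴴ := by
  rw [Matrix.conjTranspose_smul]
  congr 1
  simp [Complex.star_def, Complex.ext_iff]

lemma half_smul (θ : ℝ) :
    (1/2:ℂ) • (Complex.exp (-(θ:ℂ) * Complex.I) • A + Complex.exp ((θ:ℂ) * Complex.I) • Aᴴ)
      = Mf ((1/2:ℂ) • A) θ := by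
  unfold Mf
  rw [conj_half, smul_add, smul_smul, smul_smul, smul_smul, smul_smul]
  congr 1 <;> congr 1 <;> ring

lemma two_smul_Mf (θ : ℝ) :
    Complex.exp (-(θ:ℂ) * Complex.I) • A + Complex.exp ((θ:ℂ) * Complex.I) • Aᴴ
      = (2:ℂ) • Mf ((1/2:ℂ) • A) θ := by
  rw [← half_smul A θ, smul_smul]
  norm_num

lemma A_eq_two_smul : A = (2:ℂ) • ((1/2:ℂ) • A) := by
  rw [smul_smul]
  norm_num

lemma AH_eq_two_smul : Aᴴ = (2:ℂ) • ((1/2:ℂ) • A)ᴴ := by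
  rw [conj_half, smul_smul]
  norm_num

lemma exp_plus_star (θ : ℝ) : Complex.exp ((d:ℂ) * (θ:ℂ) * Complex.I)
    = star (Complex.exp (-(d:ℂ) * (θ:ℂ) * Complex.I)) := by
  have h : -(d:ℂ) * (θ:ℂ) * Complex.I = ((-(d * θ) : ℝ) : ℂ) * Complex.I := by push_cast; ring
  rw [h, star_exp_real]
  congr 1
  push_cast
  ring

lemma Kf_neg (hd : 3 ≤ d) (θ : ℝ) :
    ((-1:ℂ))^d * Kf A θ
      = -(Complex.exp (-(d:ℂ) * (θ:ℂ) * Complex.I) * ((1/2:ℂ) • A).det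
          + Complex.exp ((d:ℂ) * (θ:ℂ) * Complex.I) * (((1/2:ℂ) • A)ᴴ).det) := by
  have hdet : ((1/2:ℂ) • A).det = (1/2:ℂ)^d * A.det := by
    rw [Matrix.det_smul, Fintype.card_fin]
  have hs12 : star ((1/2:ℂ)^d) = (1/2:ℂ)^d := by
    rw [star_pow]
    congr 1
    simp [Complex.star_def, Complex.ext_iff]
  have hdetH : (((1/2:ℂ) • A)ᴴ).det = (1/2:ℂ)^d * Aᴴ.det := by
    rw [Matrix.det_conjTranspose, hdet, star_mul', hs12, ← Matrix.det_conjTranspose, mul_comm]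
  have hre : Complex.exp (-(d:ℂ) * (θ:ℂ) * Complex.I) * A.det
      + Complex.exp ((d:ℂ) * (θ:ℂ) * Complex.I) * Aᴴ.det
      = 2 * (((Complex.exp (-(d:ℂ) * (θ:ℂ) * Complex.I) * A.det).re : ℝ) : ℂ) := by
    rw [exp_plus_star, Matrix.det_conjTranspose, ← star_mul']
    have := Complex.add_conj (Complex.exp (-(d:ℂ) * (θ:ℂ) * Complex.I) * A.det)
    push_cast at this
    exact this
  have hm1 : ((-1:ℂ))^d * (-1:ℂ)^(d-1) = -1 := by
    rw [← pow_add]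
    exact Odd.neg_one_pow ⟨d-1, by omega⟩
  have hmp : ((-1/2:ℂ))^(d-1) = (-1:ℂ)^(d-1) * (1/2:ℂ)^(d-1) := by
    rw [← mul_pow]
    norm_num
  have hd1 : d = (d-1)+1 := by omega
  have hps : (1/2:ℂ)^d = (1/2:ℂ)^(d-1) * (1/2) := by
    conv_lhs => rw [hd1]
    rw [pow_succ]
  unfold Kf
  rw [hdet, hdetH]
  set r : ℂ := (((Complex.exp (-(d:ℂ) * (θ:ℂ) * Complex.I) * A.det).re : ℝ) : ℂ) with hr
  linear_combination ((1/2:ℂ))^d * hre + ((-1:ℂ))^d * r * hmp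
    + ((1/2:ℂ))^(d-1) * r * hm1 + 2 * r * hps

lemma condC_iff_poly : CondC A ↔ ∃ P : Polynomial ℝ, ∀ θ : ℝ,
    Matrix.charpoly (Mf ((1/2:ℂ) • A) θ)
      = P.map (algebraMap ℝ ℂ) - C (Kf A θ) := by
  unfold CondC
  constructor
  · rintro ⟨P, hP⟩
    refine ⟨P, fun θ => Polynomial.funext (fun w => ?_)⟩
    have h := hP θ w
    rw [half_smul A θ, det_smul_one_sub] at h
    rw [Polynomial.eval_sub, Polynomial.eval_map, ← Polynomial.aeval_def, Polynomial.eval_C]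
    exact h
  · rintro ⟨P, hP⟩
    refine ⟨P, fun θ w => ?_⟩
    rw [half_smul A θ, det_smul_one_sub, hP θ]
    rw [Polynomial.eval_sub, Polynomial.eval_map, ← Polynomial.aeval_def, Polynomial.eval_C]
    rfl

lemma charpoly_coeff_zero_det (θ : ℝ) :
    (Matrix.charpoly (Mf ((1/2:ℂ) • A) θ)).coeff 0
      = ((-1:ℂ))^d * (Mf ((1/2:ℂ) • A) θ).det := by
  have := aC_top ((1/2:ℂ) • A) θ
  unfold aC at this
  rwa [Nat.sub_self] at this

lemma charpoly_coeff_top (θ : ℝ) :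
    (Matrix.charpoly (Mf ((1/2:ℂ) • A) θ)).coeff d = 1 := by
  have h1 := Matrix.charpoly_monic (Mf ((1/2:ℂ) • A) θ)
  have h2 := Matrix.charpoly_natDegree_eq_dim (Mf ((1/2:ℂ) • A) θ)
  rw [Fintype.card_fin] at h2
  have := h1.coeff_natDegree
  rwa [h2] at this

lemma charpoly_coeff_gt (θ : ℝ) (n : ℕ) (hn : d < n) :
    (Matrix.charpoly (Mf ((1/2:ℂ) • A) θ)).coeff n = 0 := by
  apply Polynomial.coeff_eq_zero_of_natDegree_lt
  rw [Matrix.charpoly_natDegree_eq_dim, Fintype.card_fin]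
  exact hn

lemma poly_iff_coeff (hd : 3 ≤ d) :
    (∃ P : Polynomial ℝ, ∀ θ : ℝ, Matrix.charpoly (Mf ((1/2:ℂ) • A) θ)
        = P.map (algebraMap ℝ ℂ) - C (Kf A θ)) ↔
    ((∀ k, 1 ≤ k → k ≤ d - 1 → Konst (aC ((1/2:ℂ) • A) k)) ∧ Konst (fC ((1/2:ℂ) • A))) := by
  constructor
  · rintro ⟨P, hP⟩
    constructor
    · intro k h1 h2 θ
      unfold aC
      rw [hP θ, hP 0]
      simp only [Polynomial.coeff_sub, Polynomial.coeff_C,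
        if_neg (show ¬ (d - k = 0) by omega)]
    · intro θ
      have h1 := congrArg (fun q => Polynomial.coeff q 0) (hP θ)
      have h10 := congrArg (fun q => Polynomial.coeff q 0) (hP 0)
      simp only [Polynomial.coeff_sub, Polynomial.coeff_C, eq_self_iff_true, if_true] at h1 h10
      have hAθ := charpoly_coeff_zero_det A θ
      have hA0 := charpoly_coeff_zero_det A 0
      have hKnθ := Kf_neg A hd θ
      have hKn0 := Kf_neg A hd 0
      have hdd : ((-1:ℂ))^d * ((-1:ℂ))^d = 1 := by rw [← mul_pow]; norm_num
      unfold fC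
      linear_combination (-((-1:ℂ))^d) * hAθ + ((-1:ℂ))^d * hA0
        - (Mf ((1/2:ℂ) • A) θ).det * hdd + (Mf ((1/2:ℂ) • A) 0).det * hdd
        + ((-1:ℂ))^d * h1 - ((-1:ℂ))^d * h10 - hKnθ + hKn0
  · rintro ⟨ha, hf⟩
    set V : Matrix (Fin d) (Fin d) ℂ := (1/2:ℂ) • A with hV
    set κ : ℝ := (-1/2 : ℝ) ^ (d - 1) * (Complex.exp (-(d : ℂ) * ((0:ℝ) : ℂ) * Complex.I) * A.det).re with hκ
    have hκC : ((κ : ℝ) : ℂ) = Kf A 0 := by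
      unfold Kf
      rw [hκ]
      push_cast
      norm_num
    refine ⟨(∏ i, (X - C ((Mf_herm V 0).eigenvalues i))) + Polynomial.C κ, fun θ => ?_⟩
    have hmap : ((∏ i, (X - C ((Mf_herm V 0).eigenvalues i))) + Polynomial.C κ).map (algebraMap ℝ ℂ)
        = Matrix.charpoly (Mf V 0) + C (Kf A 0) := by
      rw [Polynomial.map_add, Polynomial.map_C, ← herm_charpoly (Mf_herm V 0)]
      congr 1
      rw [← hκC]
      rfl
    rw [hmap]
    ext n
    simp only [Polynomial.coeff_sub, Polynomial.coeff_add, Polynomial.coeff_C]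
    rcases Nat.lt_trichotomy n d with hn | hn | hn
    · rcases Nat.eq_zero_or_pos n with h0 | hpos
      · subst h0
        simp only [eq_self_iff_true, if_true]
        have hAθ := charpoly_coeff_zero_det A θ
        have hA0 := charpoly_coeff_zero_det A 0
        have hKnθ := Kf_neg A hd θ
        have hKn0 := Kf_neg A hd 0
        have hdd : ((-1:ℂ))^d * ((-1:ℂ))^d = 1 := by rw [← mul_pow]; norm_num
        have hfθ := hf θ
        unfold fC at hfθ
        linear_combination hAθ - hA0 + ((-1:ℂ))^d * hfθ + ((-1:ℂ))^d * hKnθ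
          - ((-1:ℂ))^d * hKn0 - (Kf A θ - Kf A 0) * hdd
      · rw [if_neg (by omega : ¬ (n = 0)), if_neg (by omega : ¬ (n = 0))]
        have := ha (d - n) (by omega) (by omega) θ
        unfold aC at this
        rw [(by omega : d - (d - n) = n)] at this
        rw [this]
        ring
    · subst hn
      rw [if_neg (by omega : ¬ (n = 0)), if_neg (by omega : ¬ (n = 0))]
      rw [charpoly_coeff_top, charpoly_coeff_top]
      ring
    · rw [if_neg (by omega : ¬ (n = 0)), if_neg (by omega : ¬ (n = 0))]
      rw [charpoly_coeff_gt A θ n hn, charpoly_coeff_gt A 0 n hn]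
      ring

end final
section assemble
variable (A : Matrix (Fin d) (Fin d) ℂ)

lemma trace_scale (θ : ℝ) (k : ℕ) :
    ((Complex.exp (-(θ:ℂ) * Complex.I) • A + Complex.exp ((θ:ℂ) * Complex.I) • Aᴴ) ^ k).trace
      = 2^k * pC ((1/2:ℂ) • A) k θ := by
  rw [two_smul_Mf, _root_.smul_pow, Matrix.trace_smul]
  unfold pC
  rw [smul_eq_mul]

lemma dpart_eq (θ : ℝ) :
    ((Complex.exp (-(θ:ℂ) * Complex.I) • A + Complex.exp ((θ:ℂ) * Complex.I) • Aᴴ) ^ d).trace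
      - Complex.exp (-(d:ℂ) * (θ:ℂ) * Complex.I) * (A ^ d).trace
      - Complex.exp ((d:ℂ) * (θ:ℂ) * Complex.I) * (Aᴴ ^ d).trace
      = 2^d * gC ((1/2:ℂ) • A) θ := by
  have h1 : (A ^ d).trace = 2^d * (((1/2:ℂ) • A) ^ d).trace := by
    conv_lhs => rw [A_eq_two_smul A]
    rw [_root_.smul_pow, Matrix.trace_smul, smul_eq_mul]
  have h2 : (Aᴴ ^ d).trace = 2^d * ((((1/2:ℂ) • A)ᴴ) ^ d).trace := by
    conv_lhs => rw [AH_eq_two_smul A]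
    rw [_root_.smul_pow, Matrix.trace_smul, smul_eq_mul]
  rw [trace_scale A θ d, h1, h2]
  unfold gC pC
  ring

theorem stmt3 {d : ℕ} (hd : 3 ≤ d) (A : Matrix (Fin d) (Fin d) ℂ) :
    CondC A ↔
      ((∀ k, 1 ≤ k → k ≤ d - 1 → ∃ c : ℂ, ∀ θ : ℝ,
          ((Complex.exp (-(θ : ℂ) * Complex.I) • A
            + Complex.exp ((θ : ℂ) * Complex.I) • Aᴴ) ^ k).trace = c) ∧
        (∃ c : ℂ, ∀ θ : ℝ,
          ((Complex.exp (-(θ : ℂ) * Complex.I) • A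
            + Complex.exp ((θ : ℂ) * Complex.I) • Aᴴ) ^ d).trace
            - Complex.exp (-(d : ℂ) * (θ : ℂ) * Complex.I) * (A ^ d).trace
            - Complex.exp ((d : ℂ) * (θ : ℂ) * Complex.I) * (Aᴴ ^ d).trace = c)) := by
  rw [condC_iff_poly A, poly_iff_coeff A hd, core_iff ((1/2:ℂ) • A) hd]
  constructor
  · rintro ⟨hp, hg⟩
    constructor
    · intro k h1 h2
      refine ⟨2^k * pC ((1/2:ℂ) • A) k 0, fun θ => ?_⟩
      rw [trace_scale A θ k, hp k h1 h2 θ]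
    · refine ⟨2^d * gC ((1/2:ℂ) • A) 0, fun θ => ?_⟩
      rw [dpart_eq A θ, hg θ]
  · rintro ⟨hp, hg⟩
    constructor
    · intro k h1 h2 θ
      obtain ⟨c, hc⟩ := hp k h1 h2
      have hθ := hc θ
      have h0 := hc 0
      rw [trace_scale A θ k] at hθ
      rw [trace_scale A 0 k] at h0
      have h2k : ((2:ℂ)^k) ≠ 0 := pow_ne_zero _ (by norm_num)
      apply mul_left_cancel₀ h2k
      rw [hθ, h0]
    · intro θ
      obtain ⟨c, hc⟩ := hg
      have hθ := hc θ
      have h0 := hc 0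
      rw [dpart_eq A θ] at hθ
      rw [dpart_eq A 0] at h0
      have h2k : ((2:ℂ)^d) ≠ 0 := pow_ne_zero _ (by norm_num)
      apply mul_left_cancel₀ h2k
      rw [hθ, h0]

end assemble
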